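/- Let α, β₁, β₂, β₃, γ ∈ ℝ with α > 0, β₁ > 0, γ − α > 0, γ − β₁ > 0 and γ − α − β₁ > 0, and let x₂, x₃ ∈ (−1, 1). Then Lauricella's function evaluated at first argument 1 satisfies F_D(α; β₁, β₂, β₃; γ; 1, x₂, x₃) = (Γ(γ)Γ(γ−α−β₁)/(Γ(γ−α)Γ(γ−β₁))) · F₁(α, β₂, β₃; γ−β₁; x₂, x₃), where the triple series defining F_D(α;β₁,β₂,β₃;γ;1,x₂,x₃) converges under the stated hypotheses. -/

import Mathlib

/-!
Summing first over `m`, the inner series at fixed `(n, p)` is Gauss's series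
`₂F₁(α + n + p, β₁; γ + n + p; 1)`, and Gauss's theorem evaluates it to
`Γ(γ)Γ(γ-α-β₁)/(Γ(γ-α)Γ(γ-β₁)) · (γ)_{n+p}/(γ-β₁)_{n+p}`, which turns the remaining double
series into `F₁(α, β₂, β₃; γ-β₁; x₂, x₃)`. The interchange of summations is justified by
dominating the triple series by the product of `₂F₁(α, β₁; γ; 1)` with two binomial series in
`|x₂|` and `|x₃|`, since `(α)_{m+k}/(γ)_{m+k} ≤ (α)_m/(γ)_m` for `α ≤ γ`.

Gauss's theorem `F(c) := ₂F₁(a, b; c; 1) = Γ(c)Γ(c-a-b)/(Γ(c-a)Γ(c-b))` itself comes from the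
contiguous relation `c(c-a-b) F(c) = (c-a)(c-b) F(c+1)`, which holds because the difference of
the two series telescopes. Iterating it `N` times, the Pochhammer prefactor tends to the Gamma
quotient by Euler's limit formula, while `F(c+N) → 1` by dominated convergence.
-/

/-- The Pochhammer symbol `(q)_k = q(q+1)⋯(q+k−1)`. -/
noncomputable def poch (q : ℝ) (k : ℕ) : ℝ := ∏ i ∈ Finset.range k, (q + (i : ℝ))

/-- Appell's first hypergeometric series
`F₁(α,β,β′;γ;x,y) = Σ_{m,n} (α)_{m+n}(β)_m(β′)_n/((γ)_{m+n} m! n!) x^m y^n`. -/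
noncomputable def appellF1 (α β β' γ x y : ℝ) : ℝ :=
  ∑' p : ℕ × ℕ,
    poch α (p.1 + p.2) * poch β p.1 * poch β' p.2 /
        (poch γ (p.1 + p.2) * (p.1.factorial : ℝ) * (p.2.factorial : ℝ)) *
      x ^ p.1 * y ^ p.2

/-- Lauricella's fourth hypergeometric series of three variables
`F_D(α;β₁,β₂,β₃;γ;x,y,z)
  = Σ_{m,n,p} (α)_{m+n+p}(β₁)_m(β₂)_n(β₃)_p/((γ)_{m+n+p} m! n! p!) x^m y^n z^p`. -/
noncomputable def lauricellaFD (α β₁ β₂ β₃ γ x y z : ℝ) : ℝ :=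
  ∑' p : ℕ × ℕ × ℕ,
    poch α (p.1 + p.2.1 + p.2.2) * poch β₁ p.1 * poch β₂ p.2.1 * poch β₃ p.2.2 /
        (poch γ (p.1 + p.2.1 + p.2.2) * (p.1.factorial : ℝ) * (p.2.1.factorial : ℝ) *
          (p.2.2.factorial : ℝ)) *
      x ^ p.1 * y ^ p.2.1 * z ^ p.2.2

open Filter Topology Asymptotics
open scoped Nat

section Pochhammer

variable {q r : ℝ}

lemma poch_zero (q : ℝ) : poch q 0 = 1 := Finset.prod_range_zero _

lemma poch_succ (q : ℝ) (k : ℕ) : poch q (k + 1) = poch q k * (q + k) :=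
  Finset.prod_range_succ _ _

lemma poch_add (q : ℝ) (m n : ℕ) : poch q (m + n) = poch q m * poch (q + m) n := by
  rw [poch, poch, poch, Finset.prod_range_add]
  congr 1
  refine Finset.prod_congr rfl fun i _ => ?_
  push_cast
  ring

lemma poch_succ' (q : ℝ) (k : ℕ) : poch q (k + 1) = q * poch (q + 1) k := by
  rw [add_comm k, poch_add, poch_succ, poch_zero]
  norm_num

lemma poch_one_eq_factorial (n : ℕ) : poch 1 n = n ! := by
  induction n with
  | zero => simp [poch_zero]
  | succ k ih => rw [poch_succ, ih, Nat.factorial_succ]; push_cast; ring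

lemma poch_pos (hq : 0 < q) (k : ℕ) : 0 < poch q k :=
  Finset.prod_pos fun _ _ => by positivity

lemma poch_le_poch (hq : 0 < q) (hqr : q ≤ r) (k : ℕ) : poch q k ≤ poch r k :=
  Finset.prod_le_prod (fun _ _ => by positivity) fun _ _ => by linarith

lemma poch_add_div_poch_add_le (hq : 0 < q) (hqr : q ≤ r) (m k : ℕ) :
    poch q (m + k) / poch r (m + k) ≤ poch q m / poch r m := by
  have hr : 0 < r := hq.trans_le hqr
  rw [poch_add, poch_add, mul_div_mul_comm]
  have hqm : 0 < q + m := by positivity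
  refine mul_le_of_le_one_right (div_nonneg (poch_pos hq m).le (poch_pos hr m).le) ?_
  exact div_le_one_of_le₀ (poch_le_poch hqm (by linarith) k) (poch_pos (by linarith) k).le

lemma Gamma_add_nat (hq : 0 < q) (n : ℕ) : Real.Gamma (q + n) = Real.Gamma q * poch q n := by
  induction n with
  | zero => simp [poch_zero]
  | succ k ih =>
    rw [Nat.cast_succ, ← add_assoc, Real.Gamma_add_one (by positivity), ih, poch_succ]
    ring

end Pochhammer

lemma GammaSeq_eq_div_poch (s : ℝ) (n : ℕ) :
    Real.GammaSeq s n = (n : ℝ) ^ s * n ! / poch s (n + 1) := rfl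

lemma tendsto_rpow_mul_poch_div_poch {a b c d : ℝ} (ha : 0 < a) (hb : 0 < b) (hc : 0 < c)
    (hd : 0 < d) :
    Tendsto (fun n : ℕ => (n : ℝ) ^ (a + b - c - d) *
        (poch c (n + 1) * poch d (n + 1) / (poch a (n + 1) * poch b (n + 1)))) atTop
      (𝓝 (Real.Gamma a * Real.Gamma b / (Real.Gamma c * Real.Gamma d))) := by
  have hΓ : Real.Gamma c * Real.Gamma d ≠ 0 :=
    (mul_pos (Real.Gamma_pos_of_pos hc) (Real.Gamma_pos_of_pos hd)).ne'
  refine ((((Real.GammaSeq_tendsto_Gamma a).mul (Real.GammaSeq_tendsto_Gamma b)).div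
    ((Real.GammaSeq_tendsto_Gamma c).mul (Real.GammaSeq_tendsto_Gamma d)) hΓ)).congr' ?_
  filter_upwards [eventually_gt_atTop 0] with n hn
  have hn : (0 : ℝ) < n := by exact_mod_cast hn
  have hpow : (n : ℝ) ^ (a + b - c - d) = n ^ a * n ^ b / (n ^ c * n ^ d) := by
    rw [Real.rpow_sub hn, Real.rpow_sub hn, Real.rpow_add hn, div_div]
  have := poch_pos ha (n + 1); have := poch_pos hb (n + 1)
  have := poch_pos hc (n + 1); have := poch_pos hd (n + 1)
  have := Real.rpow_pos_of_pos hn c; have := Real.rpow_pos_of_pos hn d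
  simp only [Pi.div_apply, GammaSeq_eq_div_poch, hpow]
  field_simp

lemma tsum_sub_succ_eq_of_tendsto_zero {f : ℕ → ℝ} (hs : Summable fun n => f n - f (n + 1))
    (hf : Tendsto f atTop (𝓝 0)) : ∑' n, (f n - f (n + 1)) = f 0 := by
  refine tendsto_nhds_unique hs.hasSum.tendsto_sum_nat ?_
  simp_rw [Finset.sum_range_sub']
  simpa using hf.const_sub (f 0)

/-- The `m`-th term of Gauss's series `₂F₁(a, b; c; 1)`. -/
noncomputable def gaussTerm (a b c : ℝ) (m : ℕ) : ℝ :=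
  poch a m * poch b m / (poch c m * m !)

section Gauss

variable {a b c : ℝ}

lemma gaussTerm_zero (a b c : ℝ) : gaussTerm a b c 0 = 1 := by
  simp [gaussTerm, poch_zero]

lemma gaussTerm_pos (ha : 0 < a) (hb : 0 < b) (hc : 0 < c) (m : ℕ) : 0 < gaussTerm a b c m := by
  have := poch_pos ha m; have := poch_pos hb m; have := poch_pos hc m
  unfold gaussTerm
  positivity

lemma gaussTerm_le_of_le {c' : ℝ} (ha : 0 < a) (hb : 0 < b) (hc : 0 < c) (hcc' : c ≤ c')
    (m : ℕ) : gaussTerm a b c' m ≤ gaussTerm a b c m := by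
  have := poch_pos ha m; have := poch_pos hb m; have := poch_pos hc m
  unfold gaussTerm
  gcongr
  exact poch_le_poch hc hcc' m

lemma tendsto_rpow_mul_gaussTerm (ha : 0 < a) (hb : 0 < b) (hc : 0 < c) :
    Tendsto (fun n : ℕ => (n : ℝ) ^ (c + 1 - a - b) * gaussTerm a b c (n + 1)) atTop
      (𝓝 (Real.Gamma c / (Real.Gamma a * Real.Gamma b))) := by
  simpa [gaussTerm, poch_one_eq_factorial] using tendsto_rpow_mul_poch_div_poch hc one_pos ha hb

lemma gaussTerm_succ_isBigO (ha : 0 < a) (hb : 0 < b) (hc : 0 < c) :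
    (fun n : ℕ => gaussTerm a b c (n + 1)) =O[atTop] fun n : ℕ => (n : ℝ) ^ (a + b - c - 1) := by
  refine (((tendsto_rpow_mul_gaussTerm ha hb hc).isBigO_one ℝ).mul
    (isBigO_refl (fun n : ℕ => (n : ℝ) ^ (a + b - c - 1)) atTop)).congr' ?_ ?_
  · filter_upwards [eventually_gt_atTop 0] with n hn
    rw [mul_comm, ← mul_assoc, ← Real.rpow_add (by exact_mod_cast hn)]
    rw [show a + b - c - 1 + (c + 1 - a - b) = 0 by ring, Real.rpow_zero, one_mul]
  · simp

lemma summable_gaussTerm (ha : 0 < a) (hb : 0 < b) (hs : 0 < c - a - b) :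
    Summable (gaussTerm a b c) :=
  (summable_nat_add_iff 1).mp <| summable_of_isBigO_nat
    (Real.summable_nat_rpow.mpr (by linarith)) (gaussTerm_succ_isBigO ha hb (by linarith))

lemma tendsto_natCast_mul_gaussTerm (ha : 0 < a) (hb : 0 < b) (hs : 0 < c - a - b) :
    Tendsto (fun n : ℕ => (n : ℝ) * gaussTerm a b c n) atTop (𝓝 0) := by
  rw [← tendsto_add_atTop_iff_nat 1]
  have hlim : Tendsto (fun n : ℕ => (n : ℝ) ^ (-(c - a - b)) + (n : ℝ) ^ (-(c - a - b + 1)))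
      atTop (𝓝 0) := by
    have h := ((tendsto_rpow_neg_atTop hs).add
      (tendsto_rpow_neg_atTop (y := c - a - b + 1) (by linarith))).comp tendsto_natCast_atTop_atTop
    rwa [add_zero] at h
  refine IsBigO.trans_tendsto ?_ hlim
  refine ((isBigO_refl (fun n : ℕ => ((n + 1 : ℕ) : ℝ)) atTop).mul
    (gaussTerm_succ_isBigO ha hb (by linarith))).congr' (by simp) ?_
  filter_upwards [eventually_gt_atTop 0] with n hn
  have hn : (0 : ℝ) < n := by exact_mod_cast hn
  rw [show a + b - c - 1 = -(c - a - b) - 1 by ring, neg_add', Real.rpow_sub_one hn.ne']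
  field_simp
  push_cast
  ring

lemma gaussTerm_contiguous (hc : 0 < c) (m : ℕ) :
    c * (c - a - b) * gaussTerm a b c m - (c - a) * (c - b) * gaussTerm a b (c + 1) m
      = c * m * gaussTerm a b c m - c * ((m + 1 : ℕ) : ℝ) * gaussTerm a b c (m + 1) := by
  have hc1 : poch (c + 1) m = poch c m * (c + m) / c := by
    rw [← poch_succ, poch_succ']
    field_simp
  have := poch_pos hc m
  have : 0 < c + m := by positivity
  simp only [gaussTerm, hc1, poch_succ, Nat.factorial_succ]
  push_cast
  field_simp
  ring

lemma tsum_gaussTerm_eq_mul_tsum_gaussTerm_add_one (ha : 0 < a) (hb : 0 < b)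
    (hs : 0 < c - a - b) :
    ∑' m, gaussTerm a b c m
      = (c - a) * (c - b) / (c * (c - a - b)) * ∑' m, gaussTerm a b (c + 1) m := by
  have hc : 0 < c := by linarith
  have hu := (summable_gaussTerm ha hb hs).mul_left (c * (c - a - b))
  have hv := (summable_gaussTerm ha hb (c := c + 1) (by linarith)).mul_left ((c - a) * (c - b))
  have htel : ∑' m, (c * (c - a - b) * gaussTerm a b c m
      - (c - a) * (c - b) * gaussTerm a b (c + 1) m) = 0 := by
    have hf : Tendsto (fun m : ℕ => c * m * gaussTerm a b c m) atTop (𝓝 0) := by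
      simpa [mul_assoc] using (tendsto_natCast_mul_gaussTerm ha hb hs).const_mul c
    rw [tsum_congr (gaussTerm_contiguous hc),
      tsum_sub_succ_eq_of_tendsto_zero ((summable_congr (gaussTerm_contiguous hc)).mp
        (hu.sub hv)) hf]
    simp
  rw [hu.tsum_sub hv, tsum_mul_left, tsum_mul_left] at htel
  have : c * (c - a - b) ≠ 0 := by positivity
  field_simp
  linarith

lemma tsum_gaussTerm_eq_mul_tsum_gaussTerm_add_nat (ha : 0 < a) (hb : 0 < b)
    (hs : 0 < c - a - b) (N : ℕ) :
    ∑' m, gaussTerm a b c m = poch (c - a) N * poch (c - b) N / (poch c N * poch (c - a - b) N)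
      * ∑' m, gaussTerm a b (c + N) m := by
  induction N generalizing c with
  | zero => simp [poch_zero]
  | succ N ih =>
    have := poch_pos (show 0 < c + 1 by linarith) N
    have := poch_pos (show 0 < c + 1 - a - b by linarith) N
    rw [tsum_gaussTerm_eq_mul_tsum_gaussTerm_add_one ha hb hs, ih (by linarith),
      poch_succ' (c - a), poch_succ' (c - b), poch_succ' c, poch_succ' (c - a - b),
      Nat.cast_succ, add_comm (N : ℝ), ← add_assoc]
    simp only [sub_add_eq_add_sub]
    have : c ≠ 0 := by linarith
    have : c - a - b ≠ 0 := hs.ne'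
    field_simp

lemma tendsto_poch_ratio (ha : 0 < a) (hb : 0 < b) (hs : 0 < c - a - b) :
    Tendsto (fun N : ℕ => poch (c - a) N * poch (c - b) N / (poch c N * poch (c - a - b) N))
      atTop (𝓝 (Real.Gamma c * Real.Gamma (c - a - b) /
        (Real.Gamma (c - a) * Real.Gamma (c - b)))) := by
  rw [← tendsto_add_atTop_iff_nat 1]
  have h := tendsto_rpow_mul_poch_div_poch (a := c) (b := c - a - b) (c := c - a) (d := c - b)
    (by linarith) hs (by linarith) (by linarith)
  rw [show c + (c - a - b) - (c - a) - (c - b) = 0 by ring] at h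
  simpa using h

lemma tendsto_tsum_gaussTerm_add_nat (ha : 0 < a) (hb : 0 < b) (hs : 0 < c - a - b) :
    Tendsto (fun N : ℕ => ∑' m, gaussTerm a b (c + N) m) atTop (𝓝 1) := by
  have hc : 0 < c := by linarith
  have hlim : ∀ m, Tendsto (fun N : ℕ => gaussTerm a b (c + N) m) atTop
      (𝓝 (if m = 0 then 1 else 0)) := by
    rintro (_ | m)
    · simp [gaussTerm_zero]
    · have hden : Tendsto (fun N : ℕ => poch (c + N) (m + 1)) atTop atTop := by
        refine tendsto_atTop_mono (fun N => ?_) <| Tendsto.const_mul_atTop (poch_pos hc m) <|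
          tendsto_atTop_add_const_left _ c tendsto_natCast_atTop_atTop
        rw [poch_succ]
        have : (0 : ℝ) ≤ N := N.cast_nonneg
        exact mul_le_mul (poch_le_poch hc (by linarith) m) (by linarith) (by positivity)
          (poch_pos (by positivity) m).le
      simpa [gaussTerm, div_mul_eq_div_div_swap] using tendsto_const_nhds.div_atTop hden
  have hbound : ∀ (N : ℕ) m, ‖gaussTerm a b (c + N) m‖ ≤ gaussTerm a b c m := fun N m => by
    rw [Real.norm_of_nonneg (gaussTerm_pos ha hb (by positivity) m).le]
    exact gaussTerm_le_of_le ha hb hc (by simp) m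
  simpa using tendsto_tsum_of_dominated_convergence (summable_gaussTerm ha hb hs) hlim
    (Eventually.of_forall hbound)

theorem tsum_gaussTerm (ha : 0 < a) (hb : 0 < b) (hs : 0 < c - a - b) :
    ∑' m, gaussTerm a b c m
      = Real.Gamma c * Real.Gamma (c - a - b) / (Real.Gamma (c - a) * Real.Gamma (c - b)) := by
  have h := (tendsto_poch_ratio ha hb hs).mul (tendsto_tsum_gaussTerm_add_nat ha hb hs)
  rw [mul_one] at h
  refine tendsto_nhds_unique ?_ h
  simp_rw [← tsum_gaussTerm_eq_mul_tsum_gaussTerm_add_nat ha hb hs]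
  exact tendsto_const_nhds

lemma tsum_gaussTerm_add_nat (ha : 0 < a) (hb : 0 < b) (hs : 0 < c - a - b) (k : ℕ) :
    ∑' m, gaussTerm (a + k) b (c + k) m
      = Real.Gamma c * Real.Gamma (c - a - b) / (Real.Gamma (c - a) * Real.Gamma (c - b))
        * (poch c k / poch (c - b) k) := by
  have hc : 0 < c := by linarith
  have hcb : 0 < c - b := by linarith
  rw [tsum_gaussTerm (by positivity) hb (by linarith), show c + k - (a + k) - b = c - a - b by ring,
    show c + k - (a + k) = c - a by ring, show c + k - b = c - b + k by ring,
    Gamma_add_nat hc, Gamma_add_nat hcb]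
  have := Real.Gamma_pos_of_pos hcb
  have := poch_pos hcb k
  field_simp

end Gauss

lemma summable_abs_poch_mul_pow_div_factorial (β : ℝ) {x : ℝ} (hx : |x| < 1) :
    Summable fun n : ℕ => |poch β n| * |x| ^ n / n ! := by
  obtain ⟨r, hxr, hr⟩ := exists_between hx
  have hlim : Tendsto (fun n : ℕ => (|β| + 1 * n) / (1 + 1 * n) * |x|) atTop (𝓝 (1 / 1 * |x|)) :=
    (tendsto_add_mul_div_add_mul_atTop_nhds _ _ _ one_ne_zero).mul_const _
  simp only [one_mul, div_one] at hlim
  refine summable_of_ratio_norm_eventually_le hr ?_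
  filter_upwards [hlim.eventually (gt_mem_nhds hxr)] with n hn
  have hβn : |β + n| ≤ |β| + n := by simpa using abs_add_le β n
  rw [Real.norm_of_nonneg (by positivity), Real.norm_of_nonneg (by positivity)]
  calc |poch β (n + 1)| * |x| ^ (n + 1) / (n + 1)!
      = |β + n| / (1 + n) * |x| * (|poch β n| * |x| ^ n / n !) := by
        rw [poch_succ, Nat.factorial_succ, abs_mul, pow_succ]
        push_cast
        field_simp
        ring
    _ ≤ (|β| + n) / (1 + n) * |x| * (|poch β n| * |x| ^ n / n !) := by gcongr
    _ ≤ r * (|poch β n| * |x| ^ n / n !) := by gcongr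

noncomputable def lauricellaTerm (α β₁ β₂ β₃ γ x y z : ℝ) (p : ℕ × ℕ × ℕ) : ℝ :=
  poch α (p.1 + p.2.1 + p.2.2) * poch β₁ p.1 * poch β₂ p.2.1 * poch β₃ p.2.2 /
      (poch γ (p.1 + p.2.1 + p.2.2) * (p.1.factorial : ℝ) * (p.2.1.factorial : ℝ) *
        (p.2.2.factorial : ℝ)) *
    x ^ p.1 * y ^ p.2.1 * z ^ p.2.2

noncomputable def appellTerm (α β β' γ x y : ℝ) (p : ℕ × ℕ) : ℝ :=
  poch α (p.1 + p.2) * poch β p.1 * poch β' p.2 /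
      (poch γ (p.1 + p.2) * (p.1.factorial : ℝ) * (p.2.factorial : ℝ)) *
    x ^ p.1 * y ^ p.2

section Lauricella

variable {α β₁ γ y z : ℝ} (β₂ β₃ : ℝ)

lemma norm_lauricellaTerm_one_le (hα : 0 < α) (hβ₁ : 0 < β₁) (hαγ : α ≤ γ) (m n p : ℕ) :
    ‖lauricellaTerm α β₁ β₂ β₃ γ 1 y z (m, n, p)‖
      ≤ gaussTerm α β₁ γ m * ((|poch β₂ n| * |y| ^ n / n !) * (|poch β₃ p| * |z| ^ p / p !)) := by
  have hγ : 0 < γ := hα.trans_le hαγ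
  have hpαk := poch_pos hα (m + (n + p))
  have hpγk := poch_pos hγ (m + (n + p))
  have hpβ₁ := poch_pos hβ₁ m
  have := poch_pos hα m
  have := poch_pos hγ m
  have hsplit : lauricellaTerm α β₁ β₂ β₃ γ 1 y z (m, n, p)
      = poch α (m + (n + p)) / poch γ (m + (n + p)) * (poch β₁ m / m !)
        * (poch β₂ n * y ^ n / n !) * (poch β₃ p * z ^ p / p !) := by
    simp only [lauricellaTerm, add_assoc, one_pow, mul_one]
    ring
  have hgauss : gaussTerm α β₁ γ m = poch α m / poch γ m * (poch β₁ m / m !) := by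
    rw [gaussTerm]
    ring
  rw [hsplit, hgauss, Real.norm_eq_abs]
  simp only [abs_mul, abs_div, abs_pow, Nat.abs_cast, abs_of_pos hpαk, abs_of_pos hpγk,
    abs_of_pos hpβ₁]
  refine le_of_le_of_eq ?_ (mul_assoc _ _ _)
  gcongr ?_ * _ * _ * _
  exact poch_add_div_poch_add_le hα hαγ m (n + p)

lemma summable_lauricellaTerm_one (hα : 0 < α) (hβ₁ : 0 < β₁) (hs : 0 < γ - α - β₁)
    (hy : |y| < 1) (hz : |z| < 1) : Summable (lauricellaTerm α β₁ β₂ β₃ γ 1 y z) := by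
  have hγ : 0 < γ := by linarith
  have hyz := (summable_abs_poch_mul_pow_div_factorial β₂ hy).mul_of_nonneg
    (summable_abs_poch_mul_pow_div_factorial β₃ hz) (fun _ => by positivity)
    (fun _ => by positivity)
  refine Summable.of_norm_bounded ((summable_gaussTerm hα hβ₁ hs).mul_of_nonneg hyz
    (fun m => (gaussTerm_pos hα hβ₁ hγ m).le) (fun _ => by positivity)) ?_
  rintro ⟨m, n, p⟩
  exact norm_lauricellaTerm_one_le β₂ β₃ hα hβ₁ (by linarith) m n p

lemma tsum_lauricellaTerm_one_fst (hα : 0 < α) (hβ₁ : 0 < β₁) (hs : 0 < γ - α - β₁)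
    (n p : ℕ) :
    ∑' m, lauricellaTerm α β₁ β₂ β₃ γ 1 y z (m, n, p)
      = Real.Gamma γ * Real.Gamma (γ - α - β₁) / (Real.Gamma (γ - α) * Real.Gamma (γ - β₁))
        * appellTerm α β₂ β₃ (γ - β₁) y z (n, p) := by
  have hγ : 0 < γ := by linarith
  have := poch_pos hγ (n + p); have := poch_pos (show 0 < γ - β₁ by linarith) (n + p)
  have hterm : ∀ m, lauricellaTerm α β₁ β₂ β₃ γ 1 y z (m, n, p)
      = poch α (n + p) * poch β₂ n * poch β₃ p * y ^ n * z ^ p / (poch γ (n + p) * n ! * p !)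
        * gaussTerm (α + (n + p : ℕ)) β₁ (γ + (n + p : ℕ)) m := by
    intro m
    have := poch_pos (show 0 < α + (n + p : ℕ) by positivity) m
    have := poch_pos (show 0 < γ + (n + p : ℕ) by positivity) m
    simp only [lauricellaTerm, gaussTerm, one_pow, mul_one]
    rw [show m + n + p = (n + p) + m by ring, poch_add α, poch_add γ]
    field_simp
  rw [tsum_congr hterm, tsum_mul_left, tsum_gaussTerm_add_nat hα hβ₁ hs, appellTerm]
  field_simp

end Lauricella

theorem stmt_16_general (α β₁ β₂ β₃ γ x₂ x₃ : ℝ)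
    (hα : 0 < α) (hβ₁ : 0 < β₁) (h3 : 0 < γ - α - β₁)
    (hx₂ : x₂ ∈ Set.Ioo (-1 : ℝ) 1) (hx₃ : x₃ ∈ Set.Ioo (-1 : ℝ) 1) :
    Summable (fun p : ℕ × ℕ × ℕ =>
        poch α (p.1 + p.2.1 + p.2.2) * poch β₁ p.1 * poch β₂ p.2.1 * poch β₃ p.2.2 /
            (poch γ (p.1 + p.2.1 + p.2.2) * (p.1.factorial : ℝ) * (p.2.1.factorial : ℝ) *
              (p.2.2.factorial : ℝ)) *
          (1 : ℝ) ^ p.1 * x₂ ^ p.2.1 * x₃ ^ p.2.2)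
    ∧ lauricellaFD α β₁ β₂ β₃ γ 1 x₂ x₃
        = Real.Gamma γ * Real.Gamma (γ - α - β₁) /
            (Real.Gamma (γ - α) * Real.Gamma (γ - β₁)) *
          appellF1 α β₂ β₃ (γ - β₁) x₂ x₃ := by
  have hF := summable_lauricellaTerm_one β₂ β₃ hα hβ₁ h3 (abs_lt.mpr hx₂) (abs_lt.mpr hx₃)
  refine ⟨hF, ?_⟩
  calc lauricellaFD α β₁ β₂ β₃ γ 1 x₂ x₃
      = ∑' p, lauricellaTerm α β₁ β₂ β₃ γ 1 x₂ x₃ p := rfl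
    _ = ∑' q : ℕ × ℕ, ∑' m, lauricellaTerm α β₁ β₂ β₃ γ 1 x₂ x₃ (m, q) := by
        rw [hF.tsum_prod,
          ← Summable.tsum_comm (f := fun m q => lauricellaTerm α β₁ β₂ β₃ γ 1 x₂ x₃ (m, q)) hF]
    _ = _ := by
        simp_rw [tsum_lauricellaTerm_one_fst β₂ β₃ hα hβ₁ h3]
        rw [tsum_mul_left, appellF1]
        rfl

/-- Lauricella's `F_D` at first argument `1`:
the defining triple series converges and
`F_D(α;β₁,β₂,β₃;γ;1,x₂,x₃) = Γ(γ)Γ(γ−α−β₁)/(Γ(γ−α)Γ(γ−β₁)) · F₁(α,β₂,β₃;γ−β₁;x₂,x₃)`. -/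
theorem stmt_16 (α β₁ β₂ β₃ γ x₂ x₃ : ℝ)
    (hα : 0 < α) (hβ₁ : 0 < β₁) (h1 : 0 < γ - α) (h2 : 0 < γ - β₁) (h3 : 0 < γ - α - β₁)
    (hx₂ : x₂ ∈ Set.Ioo (-1 : ℝ) 1) (hx₃ : x₃ ∈ Set.Ioo (-1 : ℝ) 1) :
    Summable (fun p : ℕ × ℕ × ℕ =>
        poch α (p.1 + p.2.1 + p.2.2) * poch β₁ p.1 * poch β₂ p.2.1 * poch β₃ p.2.2 /
            (poch γ (p.1 + p.2.1 + p.2.2) * (p.1.factorial : ℝ) * (p.2.1.factorial : ℝ) *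
              (p.2.2.factorial : ℝ)) *
          (1 : ℝ) ^ p.1 * x₂ ^ p.2.1 * x₃ ^ p.2.2)
    ∧ lauricellaFD α β₁ β₂ β₃ γ 1 x₂ x₃
        = Real.Gamma γ * Real.Gamma (γ - α - β₁) /
            (Real.Gamma (γ - α) * Real.Gamma (γ - β₁)) *
          appellF1 α β₂ β₃ (γ - β₁) x₂ x₃ :=
  stmt_16_general α β₁ β₂ β₃ γ x₂ x₃ hα hβ₁ h3 hx₂ hx₃
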